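/- arXiv:1012.5445 — 9 statements merged into one kernel-verified Lean document; each statement's English description precedes it below -/
import Mathlib

section
/- The n×n matrix with (i,j) entry i − gcd(i,j) factors as C · diag(φ(1),…,φ(n)) · Dᵀ, where φ is Euler's totient, C is the divisibility matrix (c_{ij}=1 iff j|i) and D its complement (d_{ij}=1 iff j∤i). -/
open Finset Matrix

lemma phi_sum_key (n m : ℕ) (h1 : 1 ≤ m) (h2 : m ≤ n) :
    ∑ k : Fin n, (if (k.1 + 1) ∣ m then ((Nat.totient (k.1 + 1) : ℕ) : ℂ) else 0) = m := by
  rw [Fin.sum_univ_eq_sum_range (fun k => if (k + 1) ∣ m then ((Nat.totient (k + 1) : ℕ) : ℂ) else 0)]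
  rw [← Finset.sum_filter]
  have hm : (m : ℂ) = ∑ d ∈ m.divisors, ((Nat.totient d : ℕ) : ℂ) := by
    rw [← Nat.cast_sum]
    rw [Nat.sum_totient]
  rw [hm]
  apply Finset.sum_nbij' (fun i => i + 1) (fun d => d - 1)
  · intro a ha
    simp only [Finset.mem_filter, Finset.mem_range] at ha
    exact Nat.mem_divisors.2 ⟨ha.2, by omega⟩
  · intro d hd
    rw [Nat.mem_divisors] at hd
    have h1d : 1 ≤ d := Nat.pos_of_dvd_of_pos hd.1 (by omega)
    have hdm : d ≤ m := Nat.le_of_dvd (by omega) hd.1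
    simp only [Finset.mem_filter, Finset.mem_range]
    constructor
    · omega
    · rw [Nat.sub_add_cancel h1d]; exact hd.1
  · intro a _; omega
  · intro d hd
    rw [Nat.mem_divisors] at hd
    have h1d : 1 ≤ d := Nat.pos_of_dvd_of_pos hd.1 (by omega)
    omega
  · intro a _; rfl

theorem gcd_matrix_totient_case (n : ℕ) :
    (Matrix.of fun i j : Fin n =>
        ((i.1 + 1 : ℕ) : ℂ) - ((Nat.gcd (i.1 + 1) (j.1 + 1) : ℕ) : ℂ)) =
      (Matrix.of fun i j : Fin n => if (j.1 + 1) ∣ (i.1 + 1) then (1 : ℂ) else 0) *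
        Matrix.diagonal (fun k : Fin n => ((Nat.totient (k.1 + 1) : ℕ) : ℂ)) *
        (Matrix.of fun i j : Fin n => if ¬ (j.1 + 1) ∣ (i.1 + 1) then (1 : ℂ) else 0)ᵀ := by
  ext i j
  rw [Matrix.mul_apply]
  simp only [Matrix.mul_diagonal, Matrix.transpose_apply, Matrix.of_apply]
  symm
  have hterm : ∀ k : Fin n,
      ((if (k.1 + 1) ∣ (i.1 + 1) then (1 : ℂ) else 0) * ((Nat.totient (k.1 + 1) : ℕ) : ℂ)) *
        (if ¬ (k.1 + 1) ∣ (j.1 + 1) then (1 : ℂ) else 0) =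
      (if (k.1 + 1) ∣ (i.1 + 1) then ((Nat.totient (k.1 + 1) : ℕ) : ℂ) else 0) -
      (if (k.1 + 1) ∣ Nat.gcd (i.1 + 1) (j.1 + 1) then ((Nat.totient (k.1 + 1) : ℕ) : ℂ) else 0) := by
    intro k
    have hg : (k.1 + 1) ∣ Nat.gcd (i.1 + 1) (j.1 + 1) ↔
        (k.1 + 1) ∣ (i.1 + 1) ∧ (k.1 + 1) ∣ (j.1 + 1) := Nat.dvd_gcd_iff
    by_cases h1 : (k.1 + 1) ∣ (i.1 + 1) <;> by_cases h2 : (k.1 + 1) ∣ (j.1 + 1) <;>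
      simp [h1, h2, hg]
  calc ∑ k : Fin n,
        ((if (k.1 + 1) ∣ (i.1 + 1) then (1 : ℂ) else 0) * ((Nat.totient (k.1 + 1) : ℕ) : ℂ)) *
          (if ¬ (k.1 + 1) ∣ (j.1 + 1) then (1 : ℂ) else 0)
      = ∑ k : Fin n,
        ((if (k.1 + 1) ∣ (i.1 + 1) then ((Nat.totient (k.1 + 1) : ℕ) : ℂ) else 0) -
         (if (k.1 + 1) ∣ Nat.gcd (i.1 + 1) (j.1 + 1) then ((Nat.totient (k.1 + 1) : ℕ) : ℂ) else 0)) := by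
        exact Finset.sum_congr rfl fun k _ => hterm k
    _ = ((i.1 + 1 : ℕ) : ℂ) - ((Nat.gcd (i.1 + 1) (j.1 + 1) : ℕ) : ℂ) := by
        rw [Finset.sum_sub_distrib]
        rw [phi_sum_key n (i.1 + 1) (by omega) (by omega),
          phi_sum_key n (Nat.gcd (i.1 + 1) (j.1 + 1)) (Nat.one_le_iff_ne_zero.2 (Nat.gcd_ne_zero_left (by omega))) (le_trans (Nat.gcd_le_left _ (by omega)) (by omega))]
end

section
/- The n×n matrix with (i,j) entry τ(i) − τ(gcd(i,j)) equals C · Dᵀ, where τ is the number-of-divisors function, C is the divisibility matrix (c_{ij}=1 iff j|i) and D its complement (d_{ij}=1 iff j∤i). -/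
/-! The entry `(C * Dᵀ) i j` counts the `d ≤ n` with `d ∣ i` and `d ∤ j`. Since `i ≤ n`, the `d ≤ n`
dividing `i` are all `τ(i)` divisors of `i`, and those dividing both `i` and `j` are the `τ(gcd(i, j))`
divisors of the gcd. -/

open Finset Matrix

lemma Nat.filter_dvd_Icc_eq_divisors {a n : ℕ} (ha : a ≠ 0) (han : a ≤ n) :
    {d ∈ Icc 1 n | d ∣ a} = a.divisors := by
  ext d
  simp only [mem_filter, mem_Icc, Nat.mem_divisors]
  constructor
  · rintro ⟨-, hd⟩
    exact ⟨hd, ha⟩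
  · rintro ⟨hd, -⟩
    have ha' := Nat.pos_of_ne_zero ha
    exact ⟨⟨Nat.pos_of_dvd_of_pos hd ha', (Nat.le_of_dvd ha' hd).trans han⟩, hd⟩

lemma Nat.card_filter_dvd_and_not_dvd_add (s : Finset ℕ) (a b : ℕ) :
    #{d ∈ s | d ∣ a ∧ ¬ d ∣ b} + #{d ∈ s | d ∣ Nat.gcd a b} = #{d ∈ s | d ∣ a} := by
  simp only [Nat.dvd_gcd_iff, ← filter_filter]
  rw [add_comm, card_filter_add_card_filter_not]

lemma Fin.sum_univ_val_succ_eq_sum_Icc {M : Type*} [AddCommMonoid M] (n : ℕ) (f : ℕ → M) :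
    ∑ i : Fin n, f (i + 1) = ∑ d ∈ Icc 1 n, f d := by
  rw [Fin.sum_univ_eq_sum_range (fun i => f (i + 1)), ← Finset.Ico_add_one_right_eq_Icc,
    sum_Ico_eq_sum_range, Nat.add_sub_cancel]
  simp only [add_comm]

theorem gcd_matrix_tau_case (n : ℕ) :
    (Matrix.of fun i j : Fin n =>
        (((i.1 + 1).divisors.card : ℂ) - ((Nat.gcd (i.1 + 1) (j.1 + 1)).divisors.card : ℂ))) =
      (Matrix.of fun i j : Fin n => if (j.1 + 1) ∣ (i.1 + 1) then (1 : ℂ) else 0) *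
        (Matrix.of fun i j : Fin n => if ¬ (j.1 + 1) ∣ (i.1 + 1) then (1 : ℂ) else 0)ᵀ := by
  ext i j
  set a := i.1 + 1
  set b := j.1 + 1
  have ha : a ≠ 0 := Nat.succ_ne_zero _
  have han : a ≤ n := i.2
  have hgn : Nat.gcd a b ≤ n := (Nat.gcd_le_left b (Nat.pos_of_ne_zero ha)).trans han
  have hg : Nat.gcd a b ≠ 0 := Nat.gcd_ne_zero_left ha
  have hsplit := Nat.card_filter_dvd_and_not_dvd_add (Icc 1 n) a b
  rw [Nat.filter_dvd_Icc_eq_divisors ha han, Nat.filter_dvd_Icc_eq_divisors hg hgn] at hsplit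
  simp only [mul_apply, of_apply, transpose_apply, ite_zero_mul_ite_zero, mul_one]
  rw [Fin.sum_univ_val_succ_eq_sum_Icc n (fun d => if d ∣ a ∧ ¬ d ∣ b then (1 : ℂ) else 0),
    sum_boole, ← hsplit]
  push_cast
  ring
end

section
/- The n×n matrix with (i,j) entry σ(i) − σ(gcd(i,j)) factors as C · diag(1,2,…,n) · Dᵀ, where σ is the sum-of-divisors function, C is the divisibility matrix and D its complement. -/
/-! The `(i, j)` entry of `C · diag(1, …, n) · Dᵀ` is the sum of those `k ≤ n` with `k ∣ i` and
`k ∤ j`. The divisors of `gcd(i, j)` are exactly the divisors of `i` that divide `j`, so this sum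
is `σ(i) − σ(gcd(i, j))`. -/

open Finset Matrix

theorem Nat.divisors_gcd_eq_filter {a : ℕ} (b : ℕ) (ha : a ≠ 0) :
    (a.gcd b).divisors = {d ∈ a.divisors | d ∣ b} := by
  ext d
  simp [Nat.dvd_gcd_iff, ha]

theorem Nat.sum_divisors_sub_sum_divisors_gcd {M : Type*} [AddCommGroup M] (f : ℕ → M)
    {a : ℕ} (b : ℕ) (ha : a ≠ 0) :
    ∑ d ∈ a.divisors, f d - ∑ d ∈ (a.gcd b).divisors, f d =
      ∑ d ∈ a.divisors with ¬ d ∣ b, f d := by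
  rw [Nat.divisors_gcd_eq_filter b ha, sub_eq_iff_eq_add', sum_filter_add_sum_filter_not]

theorem Nat.sum_divisors_eq_sum_fin {M : Type*} [AddCommMonoid M] (f : ℕ → M) {m n : ℕ}
    (hm : m ≠ 0) (hmn : m ≤ n) :
    ∑ d ∈ m.divisors, f d = ∑ k : Fin n, if k.1 + 1 ∣ m then f (k.1 + 1) else 0 := by
  have hdiv : m.divisors = {d ∈ Ico 1 (n + 1) | d ∣ m} := by
    ext d
    simp only [mem_divisors, mem_filter, mem_Ico]
    constructor
    · rintro ⟨hd, -⟩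
      have := Nat.pos_of_dvd_of_pos hd (Nat.pos_of_ne_zero hm)
      have := Nat.le_of_dvd (Nat.pos_of_ne_zero hm) hd
      omega
    · rintro ⟨-, hd⟩
      exact ⟨hd, hm⟩
  rw [hdiv, sum_filter, sum_Ico_eq_sum_range, Nat.add_sub_cancel, ← Fin.sum_univ_eq_sum_range]
  simp only [add_comm 1]

theorem gcd_matrix_sigma_case (n : ℕ) :
    (Matrix.of fun i j : Fin n =>
        ((∑ d ∈ (i.1 + 1).divisors, (d : ℂ)) -
          ∑ d ∈ (Nat.gcd (i.1 + 1) (j.1 + 1)).divisors, (d : ℂ))) =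
      (Matrix.of fun i j : Fin n => if (j.1 + 1) ∣ (i.1 + 1) then (1 : ℂ) else 0) *
        Matrix.diagonal (fun k : Fin n => ((k.1 + 1 : ℕ) : ℂ)) *
        (Matrix.of fun i j : Fin n => if ¬ (j.1 + 1) ∣ (i.1 + 1) then (1 : ℂ) else 0)ᵀ := by
  ext i j
  rw [of_apply, Nat.sum_divisors_sub_sum_divisors_gcd _ _ i.1.succ_ne_zero, sum_filter,
    Nat.sum_divisors_eq_sum_fin _ i.1.succ_ne_zero i.2, mul_apply]
  refine sum_congr rfl fun k _ => ?_
  simp only [mul_diagonal, transpose_apply, of_apply]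
  split_ifs <;> simp
end

section
/- Let h be an arithmetical function and set f(i,j) = h(i) − h(gcd(i,j)). Then [f(i,j)]_{n×n} = C · diag((μ*h)(1),…,(μ*h)(n)) · Dᵀ, where μ*h denotes Dirichlet convolution with the Möbius function, C is the divisibility matrix, and D its complement. -/
/-!
Entry `(i, j)` of `C · diag(g) · Dᵀ` is
`∑_{k ∣ i, k ∤ j} g k = ∑_{k ∣ i} g k - ∑_{k ∣ gcd(i, j)} g k`,
since the divisors of `i` that also divide `j` are exactly the divisors of `gcd(i, j)`.
For `g = μ * h` Möbius inversion turns the two divisor sums into `h i` and `h (gcd(i, j))`.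
-/

open Finset Matrix ArithmeticFunction
open scoped ArithmeticFunction.Moebius

theorem sum_divisors_sum_moebius_mul_eq {R : Type*} [Ring R] (h : ℕ → R) {m : ℕ}
    (hm : m ≠ 0) :
    ∑ d ∈ m.divisors, ∑ e ∈ d.divisors, (μ e : R) * h (d / e) = h m :=
  sum_eq_iff_sum_mul_moebius_eq.2
    (fun _ _ => Nat.sum_divisorsAntidiagonal (fun a b => (μ a : R) * h b)) m
    (Nat.pos_of_ne_zero hm)

theorem Fin.sum_ite_succ_dvd_eq_sum_divisors {M : Type*} [AddCommMonoid M] (g : ℕ → M)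
    {n m : ℕ} (hm : m ≠ 0) (hmn : m ≤ n) :
    ∑ k : Fin n, (if k.1 + 1 ∣ m then g (k.1 + 1) else 0) = ∑ d ∈ m.divisors, g d := by
  rw [Fin.sum_univ_eq_sum_range (fun k => if k + 1 ∣ m then g (k + 1) else 0), range_eq_Ico,
    sum_Ico_add' (fun k => if k ∣ m then g k else 0), ← sum_filter]
  congr 1
  ext d
  simp only [mem_filter, mem_Ico, Nat.mem_divisors]
  constructor
  · rintro ⟨-, hd⟩; exact ⟨hd, hm⟩
  · rintro ⟨hd, -⟩
    have := Nat.le_of_dvd (Nat.pos_of_ne_zero hm) hd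
    have := Nat.pos_of_dvd_of_pos hd (Nat.pos_of_ne_zero hm)
    omega

theorem ite_dvd_and_not_dvd {M : Type*} [AddGroup M] (k a b : ℕ) (x : M) :
    (if k ∣ a ∧ ¬ k ∣ b then x else 0) =
      (if k ∣ a then x else 0) - (if k ∣ Nat.gcd a b then x else 0) := by
  by_cases ha : k ∣ a <;> by_cases hb : k ∣ b <;> simp [ha, hb, Nat.dvd_gcd_iff]

theorem divisibility_mul_diagonal_mul_nondivisibility_transpose_apply {R : Type*} [Ring R]
    {n : ℕ} (g : ℕ → R) (i j : Fin n) :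
    ((Matrix.of fun i j : Fin n => if (j.1 + 1) ∣ (i.1 + 1) then (1 : R) else 0) *
        Matrix.diagonal (fun k : Fin n => g (k.1 + 1)) *
        (Matrix.of fun i j : Fin n => if ¬ (j.1 + 1) ∣ (i.1 + 1) then (1 : R) else 0)ᵀ) i j =
      ∑ d ∈ (i.1 + 1).divisors, g d -
        ∑ d ∈ (Nat.gcd (i.1 + 1) (j.1 + 1)).divisors, g d := by
  have hgcd : Nat.gcd (i.1 + 1) (j.1 + 1) ≠ 0 := Nat.gcd_ne_zero_left (Nat.add_one_ne_zero _)
  have hle : Nat.gcd (i.1 + 1) (j.1 + 1) ≤ n :=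
    (Nat.gcd_le_left _ (Nat.succ_pos _)).trans i.2
  rw [Matrix.mul_apply,
    ← Fin.sum_ite_succ_dvd_eq_sum_divisors g (Nat.add_one_ne_zero _) i.2,
    ← Fin.sum_ite_succ_dvd_eq_sum_divisors g hgcd hle, ← sum_sub_distrib]
  simp only [mul_diagonal, of_apply, transpose_apply, ite_mul, one_mul, zero_mul, mul_ite,
    mul_one, mul_zero]
  refine sum_congr rfl fun k _ => ?_
  rw [← ite_dvd_and_not_dvd, ← ite_and]
  exact if_congr and_comm rfl rfl

theorem gcd_matrix_moebius_inversion (n : ℕ) (h : ℕ → ℂ) :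
    (Matrix.of fun i j : Fin n =>
        h (i.1 + 1) - h (Nat.gcd (i.1 + 1) (j.1 + 1))) =
      (Matrix.of fun i j : Fin n => if (j.1 + 1) ∣ (i.1 + 1) then (1 : ℂ) else 0) *
        Matrix.diagonal (fun k : Fin n =>
          ∑ d ∈ (k.1 + 1).divisors, (μ d : ℂ) * h ((k.1 + 1) / d)) *
        (Matrix.of fun i j : Fin n => if ¬ (j.1 + 1) ∣ (i.1 + 1) then (1 : ℂ) else 0)ᵀ := by
  ext i j
  rw [divisibility_mul_diagonal_mul_nondivisibility_transpose_apply
      (fun m => ∑ d ∈ m.divisors, (μ d : ℂ) * h (m / d)),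
    sum_divisors_sum_moebius_mul_eq h (Nat.add_one_ne_zero _),
    sum_divisors_sum_moebius_mul_eq h (Nat.gcd_ne_zero_left (Nat.add_one_ne_zero _)), of_apply]
end

section
/- For an arithmetical function g, define f(i,j) = Σ_{k=1}^{n} g(k) − Σ_{d|i} g(d) − Σ_{d|j} g(d) + Σ_{d|gcd(i,j)} g(d). Then [f(i,j)]_{n×n} = D · diag(g(1),…,g(n)) · Dᵀ, where D is the 0-1 matrix with d_{ij}=1 iff j ∤ i. -/
open Finset Matrix

lemma divsum_eq (g : ℕ → ℂ) (m n : ℕ) (h1 : 1 ≤ m) (h2 : m ≤ n) :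
    (∑ k ∈ Finset.Icc 1 n, if k ∣ m then g k else 0) = ∑ d ∈ m.divisors, g d := by
  rw [← Finset.sum_filter]
  congr 1
  ext k
  simp only [Finset.mem_filter, Finset.mem_Icc, Nat.mem_divisors]
  constructor
  · rintro ⟨⟨hk1, _⟩, hkm⟩
    exact ⟨hkm, by omega⟩
  · rintro ⟨hkm, hm0⟩
    exact ⟨⟨Nat.one_le_iff_ne_zero.mpr (by rintro rfl; simp at hkm; omega),
      le_trans (Nat.le_of_dvd (by omega) hkm) h2⟩, hkm⟩

theorem gcd_matrix_factorization_thm2 (n : ℕ) (g : ℕ → ℂ) :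
    (Matrix.of fun i j : Fin n =>
        (∑ k ∈ Finset.Icc 1 n, g k) - (∑ d ∈ (i.1 + 1).divisors, g d) -
          (∑ d ∈ (j.1 + 1).divisors, g d) +
          ∑ d ∈ (Nat.gcd (i.1 + 1) (j.1 + 1)).divisors, g d) =
      (Matrix.of fun i j : Fin n => if ¬ (j.1 + 1) ∣ (i.1 + 1) then (1 : ℂ) else 0) *
        Matrix.diagonal (fun k : Fin n => g (k.1 + 1)) *
        (Matrix.of fun i j : Fin n => if ¬ (j.1 + 1) ∣ (i.1 + 1) then (1 : ℂ) else 0)ᵀ := by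
  ext i j
  rw [Matrix.mul_apply]
  simp only [Matrix.mul_apply, Matrix.diagonal, Matrix.transpose_apply, Matrix.of_apply]
  symm
  -- compute inner sum A * diagonal
  have inner : ∀ k : Fin n,
      (∑ l : Fin n, (if ¬ (l.1 + 1) ∣ (i.1 + 1) then (1:ℂ) else 0) *
        (Matrix.of fun p q : Fin n => if p = q then g (p.1+1) else 0) l k) =
      (if ¬ (k.1 + 1) ∣ (i.1 + 1) then (1:ℂ) else 0) * g (k.1+1) := by
    intro k
    rw [Finset.sum_eq_single k]
    · simp
    · intro l _ hl; simp [hl]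
    · simp
  calc (∑ k : Fin n, (∑ l : Fin n, (if ¬ (l.1 + 1) ∣ (i.1 + 1) then (1:ℂ) else 0) *
        (Matrix.of fun p q : Fin n => if p = q then g (p.1+1) else 0) l k) *
        (if ¬ (k.1 + 1) ∣ (j.1 + 1) then (1:ℂ) else 0))
      = ∑ k : Fin n, (if ¬ (k.1 + 1) ∣ (i.1 + 1) then (1:ℂ) else 0) * g (k.1+1) *
          (if ¬ (k.1 + 1) ∣ (j.1 + 1) then (1:ℂ) else 0) := by
        refine Finset.sum_congr rfl fun k _ => ?_
        rw [inner k]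
    _ = ∑ k ∈ Finset.Icc 1 n, (if ¬ k ∣ (i.1 + 1) then (1:ℂ) else 0) * g k *
          (if ¬ k ∣ (j.1 + 1) then (1:ℂ) else 0) := by
        rw [show Finset.Icc 1 n = Finset.Ico 1 (n+1) by rfl,
          Finset.sum_Ico_eq_sum_range]
        simp only [Nat.add_sub_cancel]
        rw [Fin.sum_univ_eq_sum_range (fun k => (if ¬ (k + 1) ∣ (i.1 + 1) then (1:ℂ) else 0) * g (k+1) *
          (if ¬ (k + 1) ∣ (j.1 + 1) then (1:ℂ) else 0))]
        exact Finset.sum_congr rfl fun k _ => by rw [Nat.add_comm 1 k]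
    _ = ∑ k ∈ Finset.Icc 1 n, (g k - (if k ∣ (i.1+1) then g k else 0)
          - (if k ∣ (j.1+1) then g k else 0)
          + (if k ∣ Nat.gcd (i.1+1) (j.1+1) then g k else 0)) := by
        refine Finset.sum_congr rfl fun k _ => ?_
        have hg : k ∣ Nat.gcd (i.1+1) (j.1+1) ↔ k ∣ (i.1+1) ∧ k ∣ (j.1+1) :=
          Nat.dvd_gcd_iff
        by_cases ha : k ∣ (i.1+1) <;> by_cases hb : k ∣ (j.1+1) <;>
          simp [ha, hb, hg] <;> ring
    _ = _ := by
        rw [Finset.sum_add_distrib, Finset.sum_sub_distrib, Finset.sum_sub_distrib,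
          divsum_eq g _ n (by omega) i.isLt,
          divsum_eq g _ n (by omega) j.isLt,
          divsum_eq g _ n (Nat.one_le_iff_ne_zero.mpr (Nat.gcd_ne_zero_left (by omega)))
            (le_trans (Nat.le_of_dvd (by omega) (Nat.gcd_dvd_left _ _)) i.isLt)]
end

section
/- The n×n matrix with (i,j) entry Σ_{k=1}^{n} φ(k) − i − j + gcd(i,j) factors as D · diag(φ(1),…,φ(n)) · Dᵀ, where D is the 0-1 matrix with d_{ij}=1 iff j ∤ i. -/
open Finset Matrix

lemma filter_dvd_Icc_eq_divisors (n m : ℕ) (h1 : 1 ≤ m) (h2 : m ≤ n) :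
    (Finset.Icc 1 n).filter (· ∣ m) = m.divisors := by
  ext k
  simp only [Finset.mem_filter, Finset.mem_Icc, Nat.mem_divisors]
  constructor
  · rintro ⟨⟨hk1, hkn⟩, hkm⟩
    exact ⟨hkm, by omega⟩
  · rintro ⟨hkm, hm0⟩
    have hk0 : k ≠ 0 := by rintro rfl; exact hm0 (Nat.eq_zero_of_zero_dvd hkm)
    exact ⟨⟨by omega, le_trans (Nat.le_of_dvd (by omega) hkm) h2⟩, hkm⟩

lemma sum_totient_indicator (n m : ℕ) (h1 : 1 ≤ m) (h2 : m ≤ n) :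
    ∑ k ∈ Finset.Icc 1 n, (if k ∣ m then (Nat.totient k : ℂ) else 0) = (m : ℂ) := by
  rw [← Finset.sum_filter, filter_dvd_Icc_eq_divisors n m h1 h2, ← Nat.cast_sum,
    Nat.sum_totient]

theorem gcd_matrix_thm2_totient (n : ℕ) :
    (Matrix.of fun i j : Fin n =>
        (∑ k ∈ Finset.Icc 1 n, (Nat.totient k : ℂ)) - ((i.1 + 1 : ℕ) : ℂ) -
          ((j.1 + 1 : ℕ) : ℂ) + ((Nat.gcd (i.1 + 1) (j.1 + 1) : ℕ) : ℂ)) =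
      (Matrix.of fun i j : Fin n => if ¬ (j.1 + 1) ∣ (i.1 + 1) then (1 : ℂ) else 0) *
        Matrix.diagonal (fun k : Fin n => ((Nat.totient (k.1 + 1) : ℕ) : ℂ)) *
        (Matrix.of fun i j : Fin n => if ¬ (j.1 + 1) ∣ (i.1 + 1) then (1 : ℂ) else 0)ᵀ := by
  ext i j
  have hrhs : ((Matrix.of fun i j : Fin n => if ¬ (j.1 + 1) ∣ (i.1 + 1) then (1 : ℂ) else 0) *
        Matrix.diagonal (fun k : Fin n => ((Nat.totient (k.1 + 1) : ℕ) : ℂ)) *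
        (Matrix.of fun i j : Fin n => if ¬ (j.1 + 1) ∣ (i.1 + 1) then (1 : ℂ) else 0)ᵀ) i j
      = ∑ k : Fin n, ((if ¬ (k.1 + 1) ∣ (i.1 + 1) then (1 : ℂ) else 0) *
          ((Nat.totient (k.1 + 1) : ℂ)) * (if ¬ (k.1 + 1) ∣ (j.1 + 1) then (1 : ℂ) else 0)) := by
    rw [Matrix.mul_apply]
    simp only [Matrix.mul_diagonal, Matrix.transpose_apply, Matrix.of_apply]
  rw [hrhs]
  have hterm : ∀ k : Fin n,
      (if ¬ (k.1 + 1) ∣ (i.1 + 1) then (1 : ℂ) else 0) *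
          ((Nat.totient (k.1 + 1) : ℂ)) * (if ¬ (k.1 + 1) ∣ (j.1 + 1) then (1 : ℂ) else 0)
      = (Nat.totient (k.1 + 1) : ℂ)
        - (if (k.1 + 1) ∣ (i.1 + 1) then (Nat.totient (k.1 + 1) : ℂ) else 0)
        - (if (k.1 + 1) ∣ (j.1 + 1) then (Nat.totient (k.1 + 1) : ℂ) else 0)
        + (if (k.1 + 1) ∣ Nat.gcd (i.1 + 1) (j.1 + 1) then (Nat.totient (k.1 + 1) : ℂ) else 0) := by
    intro k
    by_cases hi : (k.1 + 1) ∣ (i.1 + 1) <;> by_cases hj : (k.1 + 1) ∣ (j.1 + 1)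
    · have hg : (k.1 + 1) ∣ Nat.gcd (i.1 + 1) (j.1 + 1) := Nat.dvd_gcd hi hj
      simp [hi, hj, hg]
    · have hg : ¬ (k.1 + 1) ∣ Nat.gcd (i.1 + 1) (j.1 + 1) :=
        fun h => hj (dvd_trans h (Nat.gcd_dvd_right _ _))
      simp [hi, hj, hg]
    · have hg : ¬ (k.1 + 1) ∣ Nat.gcd (i.1 + 1) (j.1 + 1) :=
        fun h => hi (dvd_trans h (Nat.gcd_dvd_left _ _))
      simp [hi, hj, hg]
    · have hg : ¬ (k.1 + 1) ∣ Nat.gcd (i.1 + 1) (j.1 + 1) :=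
        fun h => hi (dvd_trans h (Nat.gcd_dvd_left _ _))
      simp [hi, hj, hg]
  rw [Finset.sum_congr rfl (fun k _ => hterm k)]
  rw [Finset.sum_add_distrib, Finset.sum_sub_distrib, Finset.sum_sub_distrib]
  have hconv : ∀ f : ℕ → ℂ, ∑ k : Fin n, f (k.1 + 1) = ∑ k ∈ Finset.Icc 1 n, f k := by
    intro f
    rw [Fin.sum_univ_eq_sum_range (fun k => f (k + 1)),
      show Finset.Icc 1 n = Finset.Ico 1 (n + 1) by rw [Finset.Ico_add_one_right_eq_Icc],
      Finset.sum_Ico_eq_sum_range]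
    simp [add_comm]
  rw [hconv (fun k => (Nat.totient k : ℂ)),
    hconv (fun k => if k ∣ (i.1 + 1) then (Nat.totient k : ℂ) else 0),
    hconv (fun k => if k ∣ (j.1 + 1) then (Nat.totient k : ℂ) else 0),
    hconv (fun k => if k ∣ Nat.gcd (i.1 + 1) (j.1 + 1) then (Nat.totient k : ℂ) else 0)]
  have hi1 : 1 ≤ i.1 + 1 := by omega
  have hin : i.1 + 1 ≤ n := i.2
  have hj1 : 1 ≤ j.1 + 1 := by omega
  have hjn : j.1 + 1 ≤ n := j.2
  have hg1 : 1 ≤ Nat.gcd (i.1 + 1) (j.1 + 1) := Nat.gcd_pos_of_pos_left _ (by omega)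
  have hgn : Nat.gcd (i.1 + 1) (j.1 + 1) ≤ n :=
    le_trans (Nat.le_of_dvd (by omega) (Nat.gcd_dvd_left _ _)) hin
  rw [sum_totient_indicator n _ hi1 hin, sum_totient_indicator n _ hj1 hjn,
    sum_totient_indicator n _ hg1 hgn]
  simp
end

section
/- The n×n matrix with (i,j) entry n − τ(i) − τ(j) + τ(gcd(i,j)) equals D · Dᵀ, where D is the 0-1 matrix with d_{ij}=1 iff j ∤ i and τ is the number-of-divisors function. -/
open Finset Matrix

lemma card_div_fin (n m : ℕ) (hm : 0 < m) (hmn : m ≤ n) :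
    (Finset.univ.filter (fun k : Fin n => (k.1 + 1) ∣ m)).card = m.divisors.card := by
  apply Finset.card_bij (fun k _ => k.1 + 1)
  · intro k hk
    simp only [Finset.mem_filter] at hk
    exact Nat.mem_divisors.mpr ⟨hk.2, hm.ne'⟩
  · intro a ha b hb hab
    exact Fin.ext (by omega)
  · intro d hd
    rw [Nat.mem_divisors] at hd
    have hd1 : 1 ≤ d := Nat.pos_of_dvd_of_pos hd.1 hm
    have hdn : d ≤ n := le_trans (Nat.le_of_dvd hm hd.1) hmn
    refine ⟨⟨d - 1, by omega⟩, ?_, show d - 1 + 1 = d by omega⟩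
    simp only [Finset.mem_filter, Finset.mem_univ, true_and]
    have : d - 1 + 1 = d := by omega
    rw [this]; exact hd.1

theorem gcd_matrix_thm2_tau (n : ℕ) :
    (Matrix.of fun i j : Fin n =>
        ((n : ℂ) - ((i.1 + 1).divisors.card : ℂ) - ((j.1 + 1).divisors.card : ℂ) +
          ((Nat.gcd (i.1 + 1) (j.1 + 1)).divisors.card : ℂ))) =
      (Matrix.of fun i j : Fin n => if ¬ (j.1 + 1) ∣ (i.1 + 1) then (1 : ℂ) else 0) *
        (Matrix.of fun i j : Fin n => if ¬ (j.1 + 1) ∣ (i.1 + 1) then (1 : ℂ) else 0)ᵀ := by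
  ext i j
  simp only [Matrix.mul_apply, Matrix.of_apply, Matrix.transpose_apply]
  have key : ∀ k : Fin n,
      (if ¬ (k.1 + 1) ∣ (i.1 + 1) then (1:ℂ) else 0) *
        (if ¬ (k.1 + 1) ∣ (j.1 + 1) then (1:ℂ) else 0) =
      1 - (if (k.1 + 1) ∣ (i.1 + 1) then (1:ℂ) else 0)
        - (if (k.1 + 1) ∣ (j.1 + 1) then (1:ℂ) else 0)
        + (if (k.1 + 1) ∣ Nat.gcd (i.1 + 1) (j.1 + 1) then (1:ℂ) else 0) := by
    intro k
    have : (k.1 + 1) ∣ Nat.gcd (i.1 + 1) (j.1 + 1) ↔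
        ((k.1 + 1) ∣ (i.1 + 1) ∧ (k.1 + 1) ∣ (j.1 + 1)) := Nat.dvd_gcd_iff
    by_cases h1 : (k.1 + 1) ∣ (i.1 + 1) <;> by_cases h2 : (k.1 + 1) ∣ (j.1 + 1) <;>
      simp [h1, h2, this] <;> ring
  rw [Finset.sum_congr rfl (fun k _ => key k)]
  have hsum : ∀ p : Fin n → Prop, ∀ _ : DecidablePred p,
      (∑ k : Fin n, (if p k then (1:ℂ) else 0)) =
        ((Finset.univ.filter p).card : ℂ) := by
    intro p hp
    simp [Finset.sum_ite_eq, Finset.sum_boole]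
  have c1 := card_div_fin n (i.1+1) (by omega) (by omega)
  have c2 := card_div_fin n (j.1+1) (by omega) (by omega)
  have hg : 0 < Nat.gcd (i.1 + 1) (j.1 + 1) := Nat.gcd_pos_of_pos_left _ (by omega)
  have hgn : Nat.gcd (i.1 + 1) (j.1 + 1) ≤ n :=
    le_trans (Nat.le_of_dvd (by omega) (Nat.gcd_dvd_left _ _)) (by omega)
  have c3 := card_div_fin n (Nat.gcd (i.1+1) (j.1+1)) hg hgn
  simp only [Finset.sum_add_distrib, Finset.sum_sub_distrib, Finset.sum_const,
    Finset.card_univ, Fintype.card_fin, nsmul_eq_mul, mul_one]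
  rw [hsum _ inferInstance, hsum _ inferInstance, hsum _ inferInstance, c1, c2, c3]
end

section
/- The n×n matrix with (i,j) entry n(n+1)/2 − σ(i) − σ(j) + σ(gcd(i,j)) factors as D · diag(1,2,…,n) · Dᵀ, where σ is the sum-of-divisors function and D is the 0-1 matrix with d_{ij}=1 iff j ∤ i. -/
open Finset Matrix

lemma key_div_sum (n m : ℕ) (hm : 0 < m) (hmn : m ≤ n) :
    (∑ k ∈ Finset.range n, if (k + 1) ∣ m then ((k + 1 : ℕ) : ℂ) else 0) =
      ∑ d ∈ m.divisors, (d : ℂ) := by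
  rw [← Finset.sum_filter]
  apply Finset.sum_nbij' (i := fun k => k + 1) (j := fun d => d - 1)
  · intro k hk
    simp only [Finset.mem_filter, Finset.mem_range] at hk
    exact Nat.mem_divisors.mpr ⟨hk.2, hm.ne'⟩
  · intro d hd
    rw [Nat.mem_divisors] at hd
    have hd1 : 1 ≤ d := Nat.pos_of_dvd_of_pos hd.1 hm
    have hdm : d ≤ m := Nat.le_of_dvd hm hd.1
    simp only [Finset.mem_filter, Finset.mem_range]
    refine ⟨by omega, ?_⟩
    rw [Nat.sub_add_cancel hd1]
    exact hd.1
  · intro k _; omega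
  · intro d hd
    rw [Nat.mem_divisors] at hd
    have hd1 : 1 ≤ d := Nat.pos_of_dvd_of_pos hd.1 hm
    omega
  · intro k _; rfl

lemma key_total_sum (n : ℕ) :
    (∑ k ∈ Finset.range n, ((k + 1 : ℕ) : ℂ)) = ((n * (n + 1) / 2 : ℕ) : ℂ) := by
  have h2 : (∑ k ∈ Finset.range n, (k + 1)) * 2 = n * (n + 1) := by
    induction n with
    | zero => simp
    | succ m ih => rw [Finset.sum_range_succ, add_mul, ih]; ring
  have h : (∑ k ∈ Finset.range n, (k + 1)) = n * (n + 1) / 2 := by omega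
  rw [← h]
  push_cast
  rfl

theorem gcd_matrix_thm2_sigma (n : ℕ) :
    (Matrix.of fun i j : Fin n =>
        (((n * (n + 1) / 2 : ℕ) : ℂ) - (∑ d ∈ (i.1 + 1).divisors, (d : ℂ)) -
          (∑ d ∈ (j.1 + 1).divisors, (d : ℂ)) +
          ∑ d ∈ (Nat.gcd (i.1 + 1) (j.1 + 1)).divisors, (d : ℂ))) =
      (Matrix.of fun i j : Fin n => if ¬ (j.1 + 1) ∣ (i.1 + 1) then (1 : ℂ) else 0) *
        Matrix.diagonal (fun k : Fin n => ((k.1 + 1 : ℕ) : ℂ)) *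
        (Matrix.of fun i j : Fin n => if ¬ (j.1 + 1) ∣ (i.1 + 1) then (1 : ℂ) else 0)ᵀ := by
  ext i j
  rw [Matrix.mul_apply]
  simp only [Matrix.mul_diagonal, Matrix.of_apply, Matrix.transpose_apply]
  have step : ∀ k : Fin n,
      (if ¬(k.1 + 1) ∣ (i.1 + 1) then (1 : ℂ) else 0) * ((k.1 + 1 : ℕ) : ℂ) *
        (if ¬(k.1 + 1) ∣ (j.1 + 1) then (1 : ℂ) else 0) =
      ((k.1 + 1 : ℕ) : ℂ)
        - (if (k.1 + 1) ∣ (i.1 + 1) then ((k.1 + 1 : ℕ) : ℂ) else 0)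
        - (if (k.1 + 1) ∣ (j.1 + 1) then ((k.1 + 1 : ℕ) : ℂ) else 0)
        + (if (k.1 + 1) ∣ Nat.gcd (i.1 + 1) (j.1 + 1) then ((k.1 + 1 : ℕ) : ℂ) else 0) := by
    intro k
    by_cases h1 : (k.1 + 1) ∣ (i.1 + 1) <;> by_cases h2 : (k.1 + 1) ∣ (j.1 + 1) <;>
      simp [h1, h2, Nat.dvd_gcd_iff] <;> ring
  rw [Finset.sum_congr rfl (fun k _ => step k)]
  rw [Finset.sum_add_distrib, Finset.sum_sub_distrib, Finset.sum_sub_distrib]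
  rw [Fin.sum_univ_eq_sum_range (fun k => ((k + 1 : ℕ) : ℂ)),
    Fin.sum_univ_eq_sum_range (fun k => if (k + 1) ∣ (i.1 + 1) then ((k + 1 : ℕ) : ℂ) else 0),
    Fin.sum_univ_eq_sum_range (fun k => if (k + 1) ∣ (j.1 + 1) then ((k + 1 : ℕ) : ℂ) else 0),
    Fin.sum_univ_eq_sum_range
      (fun k => if (k + 1) ∣ Nat.gcd (i.1 + 1) (j.1 + 1) then ((k + 1 : ℕ) : ℂ) else 0)]
  have hg : 0 < Nat.gcd (i.1 + 1) (j.1 + 1) := Nat.gcd_pos_of_pos_left _ (Nat.succ_pos _)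
  have hgn : Nat.gcd (i.1 + 1) (j.1 + 1) ≤ n :=
    le_trans (Nat.le_of_dvd (Nat.succ_pos _) (Nat.gcd_dvd_left _ _)) i.2
  rw [key_total_sum, key_div_sum n _ (Nat.succ_pos _) i.2, key_div_sum n _ (Nat.succ_pos _) j.2,
    key_div_sum n _ hg hgn]
end

section
/- Smith's determinant: det[gcd(i,j)]_{1≤i,j≤n} = φ(1)·φ(2)⋯φ(n), where φ is Euler's totient function. -/
open Finset Matrix

private lemma prod_totient_range_eq_Icc (n : ℕ) :
    (∏ k ∈ Finset.range n, ((Nat.totient (k + 1) : ℕ) : ℤ))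
      = ∏ k ∈ Finset.Icc 1 n, ((Nat.totient k : ℕ) : ℤ) := by
  induction n with
  | zero => simp
  | succ m ih =>
      rw [Finset.prod_range_succ, ih, Finset.prod_Icc_succ_top (by omega)]

theorem smith_determinant (n : ℕ) :
    Matrix.det (Matrix.of fun i j : Fin n => ((Nat.gcd (i.1 + 1) (j.1 + 1) : ℕ) : ℤ)) =
      ∏ k ∈ Finset.Icc 1 n, (Nat.totient k : ℤ) := by
  classical
  set C : Matrix (Fin n) (Fin n) ℤ :=
    Matrix.of fun i j : Fin n => if (j.1 + 1) ∣ (i.1 + 1) then (1 : ℤ) else 0 with hC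
  set D : Matrix (Fin n) (Fin n) ℤ :=
    Matrix.diagonal fun k : Fin n => ((Nat.totient (k.1 + 1) : ℕ) : ℤ) with hD
  have hfact : (Matrix.of fun i j : Fin n => ((Nat.gcd (i.1 + 1) (j.1 + 1) : ℕ) : ℤ))
      = C * D * Cᵀ := by
    ext i j
    have hmul : (C * D * Cᵀ) i j
        = ∑ k : Fin n, C i k * ((Nat.totient (k.1 + 1) : ℕ) : ℤ) * C j k := by
      rw [Matrix.mul_apply]
      refine Finset.sum_congr rfl fun k _ => ?_
      rw [Matrix.transpose_apply, hD, Matrix.mul_diagonal]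
    rw [hmul]
    set g : ℕ := Nat.gcd (i.1 + 1) (j.1 + 1) with hg
    have hgpos : 0 < g := Nat.gcd_pos_of_pos_left _ (Nat.succ_pos _)
    have hgle : g ≤ n := le_trans (Nat.le_of_dvd (Nat.succ_pos _) (Nat.gcd_dvd_left _ _))
      (Nat.succ_le_of_lt i.2)
    have hsummand : ∀ k : Fin n,
        C i k * ((Nat.totient (k.1 + 1) : ℕ) : ℤ) * C j k
          = if (k.1 + 1) ∣ g then ((Nat.totient (k.1 + 1) : ℕ) : ℤ) else 0 := by
      intro k
      by_cases h : (k.1 + 1) ∣ g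
      · have h1 : (k.1 + 1) ∣ (i.1 + 1) := h.trans (Nat.gcd_dvd_left _ _)
        have h2 : (k.1 + 1) ∣ (j.1 + 1) := h.trans (Nat.gcd_dvd_right _ _)
        simp only [hC, Matrix.of_apply, if_pos h1, if_pos h2, if_pos h]
        ring
      · have : ¬ ((k.1 + 1) ∣ (i.1 + 1) ∧ (k.1 + 1) ∣ (j.1 + 1)) := by
          intro ⟨h1, h2⟩; exact h (Nat.dvd_gcd h1 h2)
        by_cases h1 : (k.1 + 1) ∣ (i.1 + 1)
        · have h2 : ¬ (k.1 + 1) ∣ (j.1 + 1) := fun h2 => this ⟨h1, h2⟩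
          simp only [hC, Matrix.of_apply, if_pos h1, if_neg h2, if_neg h]
          ring
        · simp only [hC, Matrix.of_apply, if_neg h1, if_neg h]
          ring
    rw [Finset.sum_congr rfl fun k _ => hsummand k]
    have hrange : (∑ k : Fin n, if (k.1 + 1) ∣ g then ((Nat.totient (k.1 + 1) : ℕ) : ℤ) else 0)
        = ∑ k ∈ Finset.range n, if (k + 1) ∣ g then ((Nat.totient (k + 1) : ℕ) : ℤ) else 0 := by
      rw [Finset.sum_range fun k => if (k + 1) ∣ g then ((Nat.totient (k + 1) : ℕ) : ℤ) else 0]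
    rw [hrange]
    have hdiv : (∑ k ∈ Finset.range n, if (k + 1) ∣ g then ((Nat.totient (k + 1) : ℕ) : ℤ) else 0)
        = ∑ d ∈ g.divisors, ((Nat.totient d : ℕ) : ℤ) := by
      rw [← Finset.sum_filter]
      apply Finset.sum_nbij' (fun k => k + 1) (fun d => d - 1)
      · intro k hk
        simp only [Finset.mem_filter, Finset.mem_range] at hk
        exact Nat.mem_divisors.2 ⟨hk.2, hgpos.ne'⟩
      · intro d hd
        rw [Nat.mem_divisors] at hd
        have hd1 : 1 ≤ d := Nat.pos_of_dvd_of_pos hd.1 hgpos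
        have hdle : d ≤ g := Nat.le_of_dvd hgpos hd.1
        simp only [Finset.mem_filter, Finset.mem_range]
        constructor
        · omega
        · rw [Nat.sub_add_cancel hd1]; exact hd.1
      · intro k _; omega
      · intro d hd
        rw [Nat.mem_divisors] at hd
        have hd1 : 1 ≤ d := Nat.pos_of_dvd_of_pos hd.1 hgpos
        omega
      · intro k _; rfl
    rw [hdiv]
    have hsum := Nat.sum_totient g
    rw [Matrix.of_apply, ← hg]
    exact_mod_cast hsum.symm
  rw [hfact, Matrix.det_mul, Matrix.det_mul, Matrix.det_transpose]
  have hCtri : C.BlockTriangular OrderDual.toDual := by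
    intro i j hij
    have hij' : (i : ℕ) < (j : ℕ) := hij
    have hnot : ¬ (j.1 + 1) ∣ (i.1 + 1) := by
      intro h
      have := Nat.le_of_dvd (Nat.succ_pos _) h
      omega
    simp only [hC, Matrix.of_apply, if_neg hnot]
  have hdetC : C.det = 1 := by
    rw [Matrix.det_of_lowerTriangular C hCtri]
    have : ∀ i : Fin n, C i i = 1 := by
      intro i
      simp only [hC, Matrix.of_apply, if_pos (dvd_refl _)]
    rw [Finset.prod_congr rfl fun i _ => this i, Finset.prod_const_one]
  rw [hdetC, hD, Matrix.det_diagonal]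
  have hprod : (∏ k : Fin n, ((Nat.totient (k.1 + 1) : ℕ) : ℤ))
      = ∏ k ∈ Finset.Icc 1 n, ((Nat.totient k : ℕ) : ℤ) := by
    rw [Fin.prod_univ_eq_prod_range fun k => ((Nat.totient (k + 1) : ℕ) : ℤ)]
    exact prod_totient_range_eq_Icc n
  rw [hprod]
  ring
end
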